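/- Let G be a graph, let S be a clique of size d+1 in G, and let u, v be vertices of G. If {u,s} and {v,s} are globally linked in G in ℝ^d for every s ∈ S, then {u,v} is globally linked in G in ℝ^d. -/

import Mathlib

variable {V : Type*}

/-- a `d`-dimensional framework `(G,p)` is generic if the coordinates of the points are
algebraically independent over `ℚ`. -/
def Genericp (d : ℕ) (p : V → EuclideanSpace ℝ (Fin d)) : Prop :=
  AlgebraicIndependent ℚ (fun vi : V × Fin d => p vi.1 vi.2)

/-- `(G,p)` and `(G,q)` are equivalent: corresponding edges have equal lengths. -/
def FEquiv (G : SimpleGraph V) (d : ℕ) (p q : V → EuclideanSpace ℝ (Fin d)) : Prop :=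
  ∀ a b, G.Adj a b → dist (p a) (p b) = dist (q a) (q b)

/-- `(G,p)` and `(G,q)` are congruent. -/
def FCong {d : ℕ} (p q : V → EuclideanSpace ℝ (Fin d)) : Prop :=
  ∀ a b, dist (p a) (p b) = dist (q a) (q b)

/-- orthogonal reflection in the affine span of `s` (the identity for `s = ∅`). -/
noncomputable def reflSpan {d : ℕ} (s : Set (EuclideanSpace ℝ (Fin d))) :
    EuclideanSpace ℝ (Fin d) → EuclideanSpace ℝ (Fin d) :=
  haveI := Classical.propDecidable s.Nonempty
  if h : s.Nonempty then
    haveI : Nonempty s := h.to_subtype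
    fun x => EuclideanGeometry.reflection (affineSpan ℝ s) x
  else id

/-- `(G,p)` is rigid. -/
def RigidFw (G : SimpleGraph V) (d : ℕ) (p : V → EuclideanSpace ℝ (Fin d)) : Prop :=
  ∃ ε > (0 : ℝ), ∀ q, FEquiv G d p q → (∀ w, dist (p w) (q w) < ε) → FCong p q

/-- `G` is rigid in `ℝ^d`. -/
def RigidGraph (G : SimpleGraph V) (d : ℕ) : Prop :=
  ∀ p, Genericp d p → RigidFw G d p

/-- `G` is globally rigid in `ℝ^d`. -/
def GloballyRigidGraph (G : SimpleGraph V) (d : ℕ) : Prop :=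
  ∀ p, Genericp d p → ∀ q, FEquiv G d p q → FCong p q

/-- `{u,v}` is globally linked in `G` in `ℝ^d`. -/
def GloballyLinked (G : SimpleGraph V) (d : ℕ) (u v : V) : Prop :=
  ∀ p q, Genericp d p → FEquiv G d p q → dist (p u) (p v) = dist (q u) (q v)

/-!
For a generic `p`, the `d + 1` points `p s`, `s ∈ S`, are affinely independent (a nonzero
determinant in the coordinates stays nonzero under an algebraically independent evaluation), so
they affinely span `ℝ^d`. In an equivalent realization `q` the clique fixes all distances within
`S`, and global linkedness fixes those from `u` and `v` to `S`. By polarization this fixes the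
Gram data of the vectors `p s - p s₀`, `p u - p s₀`, `p v - p s₀`, so `q u - q s₀` and
`q v - q s₀` have the same coordinates with respect to the `q s - q s₀` as their `p`-counterparts
have with respect to the `p s - p s₀`; hence `‖p u - p v‖ = ‖q u - q v‖`.
-/

section InnerProductSpace

open scoped RealInnerProductSpace

variable {E F : Type*} [NormedAddCommGroup E] [InnerProductSpace ℝ E]
  [NormedAddCommGroup F] [InnerProductSpace ℝ F]

theorem real_inner_sub_sub_eq_dist_sq (a b c : E) :
    ⟪a - c, b - c⟫ = (dist a c ^ 2 + dist b c ^ 2 - dist a b ^ 2) / 2 := by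
  rw [dist_eq_norm, dist_eq_norm, dist_eq_norm, ← sub_sub_sub_cancel_right a b c,
    norm_sub_sq_real (a - c) (b - c)]
  ring

theorem inner_sub_sub_eq_of_dist_eq {x y z : E} {x' y' z' : F}
    (hxz : dist x z = dist x' z') (hyz : dist y z = dist y' z') (hxy : dist x y = dist x' y') :
    ⟪x - z, y - z⟫ = ⟪x' - z', y' - z'⟫ := by
  rw [real_inner_sub_sub_eq_dist_sq, real_inner_sub_sub_eq_dist_sq, hxz, hyz, hxy]

theorem inner_sum_smul_eq_of_inner_eq {ι : Type*} [Fintype ι] {e : ι → E} {f : ι → F}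
    (hef : ∀ i j, ⟪e i, e j⟫ = ⟪f i, f j⟫) (a b : ι → ℝ) :
    ⟪∑ i, a i • e i, ∑ j, b j • e j⟫ = ⟪∑ i, a i • f i, ∑ j, b j • f j⟫ := by
  simp only [sum_inner, inner_sum, real_inner_smul_left, real_inner_smul_right, hef]

theorem norm_sum_smul_eq_of_inner_eq {ι : Type*} [Fintype ι] {e : ι → E} {f : ι → F}
    (hef : ∀ i j, ⟪e i, e j⟫ = ⟪f i, f j⟫) (a : ι → ℝ) :
    ‖∑ i, a i • e i‖ = ‖∑ i, a i • f i‖ := by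
  rw [norm_eq_sqrt_real_inner, norm_eq_sqrt_real_inner, inner_sum_smul_eq_of_inner_eq hef]

theorem eq_sum_smul_of_inner_eq {ι : Type*} [Fintype ι] {e : ι → E} {f : ι → F}
    (hef : ∀ i j, ⟪e i, e j⟫ = ⟪f i, f j⟫) {x : E} {x' : F} (hxx : ⟪x, x⟫ = ⟪x', x'⟫)
    (hxe : ∀ i, ⟪x, e i⟫ = ⟪x', f i⟫) {a : ι → ℝ} (hx : x = ∑ i, a i • e i) :
    x' = ∑ i, a i • f i := by
  have hex : ∀ i, ⟪e i, x⟫ = ⟪f i, x'⟫ := fun i => by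
    rw [real_inner_comm, hxe, real_inner_comm]
  -- the squared norm of `x' - ∑ a • f` expands to that of `x - ∑ a • e`, which is `0`
  have hnorm : ⟪x' - ∑ i, a i • f i, x' - ∑ i, a i • f i⟫
      = ⟪x - ∑ i, a i • e i, x - ∑ i, a i • e i⟫ := by
    simp only [inner_sub_left, inner_sub_right, sum_inner, inner_sum,
      real_inner_smul_left, real_inner_smul_right, hxx, hxe, hex, hef]
  rw [← hx, sub_self, inner_zero_left] at hnorm
  exact sub_eq_zero.mp (inner_self_eq_zero.mp hnorm)

theorem dist_eq_of_dist_eq_of_affineSpan_eq_top {ι : Type*} [Fintype ι] {t : ι → E}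
    {t' : ι → F} (hspan : affineSpan ℝ (Set.range t) = ⊤)
    (ht : ∀ i j, dist (t i) (t j) = dist (t' i) (t' j)) {x y : E} {x' y' : F}
    (hx : ∀ i, dist x (t i) = dist x' (t' i)) (hy : ∀ i, dist y (t i) = dist y' (t' i)) :
    dist x y = dist x' y' := by
  obtain ⟨-, i₀, -⟩ : (Set.range t).Nonempty :=
    Set.nonempty_iff_ne_empty.mpr fun h => by simp [h] at hspan
  let e : ι → E := fun i => t i - t i₀
  let f : ι → F := fun i => t' i - t' i₀
  have hef : ∀ i j, ⟪e i, e j⟫ = ⟪f i, f j⟫ := fun i j =>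
    inner_sub_sub_eq_of_dist_eq (ht i i₀) (ht j i₀) (ht i j)
  have he : Submodule.span ℝ (Set.range e) = ⊤ := by
    have hvec := vectorSpan_range_eq_span_range_vsub_right ℝ t i₀
    rw [← direction_affineSpan, hspan, AffineSubspace.direction_top] at hvec
    exact hvec.symm
  have coords : ∀ {z : E} {z' : F}, (∀ i, dist z (t i) = dist z' (t' i)) →
      ∃ a : ι → ℝ, z - t i₀ = ∑ i, a i • e i ∧ z' - t' i₀ = ∑ i, a i • f i := by
    intro z z' hz
    obtain ⟨a, ha⟩ := Submodule.mem_span_range_iff_exists_fun ℝ |>.mp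
      (he ▸ Submodule.mem_top (x := z - t i₀))
    refine ⟨a, ha.symm, eq_sum_smul_of_inner_eq hef ?_ (fun i => ?_) ha.symm⟩
    · exact inner_sub_sub_eq_of_dist_eq (hz i₀) (hz i₀) (by simp)
    · exact inner_sub_sub_eq_of_dist_eq (hz i₀) (ht i i₀) (hz i)
  obtain ⟨a, hxa, hxa'⟩ := coords hx
  obtain ⟨b, hyb, hyb'⟩ := coords hy
  calc dist x y = ‖∑ i, (a - b) i • e i‖ := by
        simp only [Pi.sub_apply, sub_smul, Finset.sum_sub_distrib, ← hxa, ← hyb, dist_eq_norm,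
          sub_sub_sub_cancel_right]
    _ = ‖∑ i, (a - b) i • f i‖ := norm_sum_smul_eq_of_inner_eq hef _
    _ = dist x' y' := by
        simp only [Pi.sub_apply, sub_smul, Finset.sum_sub_distrib, ← hxa', ← hyb', dist_eq_norm,
          sub_sub_sub_cancel_right]

end InnerProductSpace

section Generic

open MvPolynomial

theorem Genericp.linearIndependent_sub {d : ℕ} {p : V → EuclideanSpace ℝ (Fin d)}
    (hp : Genericp d p) {s : Fin (d + 1) → V} (hs : Function.Injective s) :
    LinearIndependent ℝ (fun i : Fin d => p (s i.succ) - p (s 0)) := by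
  let N : Matrix (Fin d) (Fin d) (MvPolynomial (V × Fin d) ℚ) :=
    Matrix.of fun i j => X (s i.succ, j) - X (s 0, j)
  -- specializing `X (s j.succ, j) ↦ 1` and every other variable to `0` turns `N` into `1`
  have hN : N.det ≠ 0 := by
    classical
    let g : V × Fin d → ℚ := fun wj => if wj.1 = s wj.2.succ then 1 else 0
    have hg : N.map (aeval g) = 1 := by
      ext i j
      simp [N, g, Matrix.one_apply, hs.eq_iff, (Fin.succ_ne_zero j).symm]
    intro h
    have h1 := (aeval g).map_det N
    rw [h, map_zero, AlgHom.mapMatrix_apply, hg, Matrix.det_one] at h1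
    exact zero_ne_one h1
  let M : Matrix (Fin d) (Fin d) ℝ := Matrix.of fun i j => p (s i.succ) j - p (s 0) j
  have hM : M.det ≠ 0 := by
    have hNM : N.map (aeval fun vi : V × Fin d => p vi.1 vi.2) = M := by
      ext i j
      simp [N, M]
    rw [← hNM, ← AlgHom.mapMatrix_apply, ← AlgHom.map_det]
    exact (map_ne_zero_iff _ hp).mpr hN
  exact LinearIndependent.of_comp (WithLp.linearEquiv 2 ℝ (Fin d → ℝ)).toLinearMap
    (Matrix.linearIndependent_rows_of_det_ne_zero hM)

theorem Genericp.affineIndependent {d : ℕ} {p : V → EuclideanSpace ℝ (Fin d)}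
    (hp : Genericp d p) {ι : Type*} [Fintype ι] {s : ι → V} (hs : Function.Injective s)
    (hcard : Fintype.card ι = d + 1) : AffineIndependent ℝ (p ∘ s) := by
  let σ := (Fintype.equivFinOfCardEq hcard).symm
  rw [← affineIndependent_equiv σ,
    affineIndependent_iff_linearIndependent_vsub ℝ ((p ∘ s) ∘ σ) 0,
    ← linearIndependent_equiv (finSuccAboveEquiv 0)]
  convert hp.linearIndependent_sub (hs.comp σ.injective) using 2
  · ext i : 1
    simp [finSuccAboveEquiv]
  · rfl

end Generic

theorem stmt14_general {V : Type*} (G : SimpleGraph V) (d : ℕ)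
    (S : Finset V) (hcard : S.card = d + 1)
    (hclique : ∀ a ∈ S, ∀ b ∈ S, a ≠ b → G.Adj a b)
    (u v : V)
    (h : ∀ s ∈ S, GloballyLinked G d u s ∧ GloballyLinked G d v s) :
    GloballyLinked G d u v := by
  intro p q hp hpq
  have hspan : affineSpan ℝ (Set.range fun a : S => p a) = ⊤ :=
    (hp.affineIndependent Subtype.val_injective (by simp [hcard]))
      |>.affineSpan_eq_top_iff_card_eq_finrank_add_one.mpr (by simp [hcard])
  have hS : ∀ a b : S, dist (p a) (p b) = dist (q a) (q b) := by
    intro a b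
    by_cases hab : a = b
    · rw [hab, dist_self, dist_self]
    · exact hpq a b (hclique a a.2 b b.2 (Subtype.val_injective.ne hab))
  exact dist_eq_of_dist_eq_of_affineSpan_eq_top hspan hS (fun a => (h a a.2).1 p q hp hpq)
    (fun a => (h a a.2).2 p q hp hpq)

theorem stmt14 {V : Type*} [Fintype V] [DecidableEq V] (G : SimpleGraph V) (d : ℕ)
    (S : Finset V) (hcard : S.card = d + 1)
    (hclique : ∀ a ∈ S, ∀ b ∈ S, a ≠ b → G.Adj a b)
    (u v : V)
    (h : ∀ s ∈ S, GloballyLinked G d u s ∧ GloballyLinked G d v s) :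
    GloballyLinked G d u v :=
  stmt14_general G d S hcard hclique u v h
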